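/- For every non-negative integer n, the dimension over Z/2Z of the vector space DST(n) of dihedrally symmetric binary Steinhaus triangles of size n equals ⌊(n+3)/6⌋ + δ_{1,(n mod 6)}. -/

import Mathlib

open Finset

namespace Steinhaus

/-- Extended binomial coefficient `C(a,b)` for integers `a`, `b`:
`C(a,0) = 1`, `C(0,b) = 0` for `b > 0`, Pascal's rule everywhere; in particular
`C(a,b) = 0` for `b < 0` and `C(a,b) = (-1)^b C(b-a-1,b)` for `a < 0 ≤ b`. -/
def ibinom (a b : ℤ) : ℤ :=
  if b < 0 then 0
  else if 0 ≤ a then (a.toNat.choose b.toNat : ℤ)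
  else (-1) ^ b.toNat * ((b - a - 1).toNat.choose b.toNat : ℤ)

/-- `(i,j)` is an index of the triangle of size `n`, i.e. `1 ≤ i ≤ j ≤ n`. -/
def InTri (n i j : ℕ) : Prop := 1 ≤ i ∧ i ≤ j ∧ j ≤ n

instance (n i j : ℕ) : Decidable (InTri n i j) :=
  inferInstanceAs (Decidable (1 ≤ i ∧ i ≤ j ∧ j ≤ n))

/-- The `ZMod 2`-vector space of binary Steinhaus triangles of size `n`,
realized as functions `ℕ → ℕ → ZMod 2` vanishing outside the triangle
`{(i,j) | 1 ≤ i ≤ j ≤ n}` and satisfying the local rule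
`a i j = a (i-1) (j-1) + a (i-1) j` inside it. -/
def ST (n : ℕ) : Submodule (ZMod 2) (ℕ → ℕ → ZMod 2) where
  carrier := {a | (∀ i j, ¬ InTri n i j → a i j = 0) ∧
    ∀ i j, 2 ≤ i → i ≤ j → j ≤ n → a i j = a (i - 1) (j - 1) + a (i - 1) j}
  add_mem' := by
    rintro a b ⟨ha0, ha1⟩ ⟨hb0, hb1⟩
    refine ⟨fun i j h => ?_, fun i j h2 hij hjn => ?_⟩
    · simp only [Pi.add_apply, ha0 i j h, hb0 i j h, add_zero]
    · simp only [Pi.add_apply, ha1 i j h2 hij hjn, hb1 i j h2 hij hjn]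
      ring
  zero_mem' := ⟨fun _ _ _ => rfl, fun _ _ _ _ _ => by simp⟩
  smul_mem' := by
    rintro c a ⟨ha0, ha1⟩
    refine ⟨fun i j h => ?_, fun i j h2 hij hjn => ?_⟩
    · simp only [Pi.smul_apply, ha0 i j h, smul_zero]
    · simp only [Pi.smul_apply, ha1 i j h2 hij hjn, smul_add]

/-- The first row of the triangle `a` (of size `n`) is the sequence `S`;
equivalently, `a = ∇S`. -/
def FirstRow (n : ℕ) (a : ℕ → ℕ → ZMod 2) (S : ℕ → ZMod 2) : Prop :=
  ∀ j, 1 ≤ j → j ≤ n → a 1 j = S j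

/-- The rotation `r` by 120 degrees: `r(a)_{i,j} = a_{j-i+1, n-i+1}`. -/
def rot (n : ℕ) (a : ℕ → ℕ → ZMod 2) : ℕ → ℕ → ZMod 2 :=
  fun i j => if InTri n i j then a (j - i + 1) (n - i + 1) else 0

/-- The horizontal reflection `h`: `h(a)_{i,j} = a_{i, n-j+i}`. -/
def hrefl (n : ℕ) (a : ℕ → ℕ → ZMod 2) : ℕ → ℕ → ZMod 2 :=
  fun i j => if InTri n i j then a i (n - j + i) else 0

lemma rot_add (n : ℕ) (a b : ℕ → ℕ → ZMod 2) :
    rot n (a + b) = rot n a + rot n b := by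
  funext i j
  simp only [rot, Pi.add_apply]
  split_ifs <;> simp

lemma rot_smul (n : ℕ) (c : ZMod 2) (a : ℕ → ℕ → ZMod 2) :
    rot n (c • a) = c • rot n a := by
  funext i j
  simp only [rot, Pi.smul_apply]
  split_ifs <;> simp

lemma hrefl_add (n : ℕ) (a b : ℕ → ℕ → ZMod 2) :
    hrefl n (a + b) = hrefl n a + hrefl n b := by
  funext i j
  simp only [hrefl, Pi.add_apply]
  split_ifs <;> simp

lemma hrefl_smul (n : ℕ) (c : ZMod 2) (a : ℕ → ℕ → ZMod 2) :
    hrefl n (c • a) = c • hrefl n a := by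
  funext i j
  simp only [hrefl, Pi.smul_apply]
  split_ifs <;> simp

/-- The linear map `ρ = r² + r + id`. -/
def rho (n : ℕ) (a : ℕ → ℕ → ZMod 2) : ℕ → ℕ → ZMod 2 :=
  rot n (rot n a) + rot n a + a

/-- The subspace of rotationally symmetric Steinhaus triangles (fixed by `r`). -/
def RST (n : ℕ) : Submodule (ZMod 2) (ℕ → ℕ → ZMod 2) where
  carrier := {a | a ∈ ST n ∧ rot n a = a}
  add_mem' := by
    rintro a b ⟨ha, ha'⟩ ⟨hb, hb'⟩
    exact ⟨add_mem ha hb, by rw [rot_add, ha', hb']⟩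
  zero_mem' := ⟨zero_mem _, by funext i j; simp [rot]⟩
  smul_mem' := by
    rintro c a ⟨ha, ha'⟩
    exact ⟨Submodule.smul_mem _ c ha, by rw [rot_smul, ha']⟩

/-- The subspace of horizontally symmetric Steinhaus triangles (fixed by `h`). -/
def HST (n : ℕ) : Submodule (ZMod 2) (ℕ → ℕ → ZMod 2) where
  carrier := {a | a ∈ ST n ∧ hrefl n a = a}
  add_mem' := by
    rintro a b ⟨ha, ha'⟩ ⟨hb, hb'⟩
    exact ⟨add_mem ha hb, by rw [hrefl_add, ha', hb']⟩
  zero_mem' := ⟨zero_mem _, by funext i j; simp [hrefl]⟩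
  smul_mem' := by
    rintro c a ⟨ha, ha'⟩
    exact ⟨Submodule.smul_mem _ c ha, by rw [hrefl_smul, ha']⟩

/-- The subspace of dihedrally symmetric Steinhaus triangles (fixed by `r` and `h`). -/
def DST (n : ℕ) : Submodule (ZMod 2) (ℕ → ℕ → ZMod 2) where
  carrier := {a | a ∈ ST n ∧ rot n a = a ∧ hrefl n a = a}
  add_mem' := by
    rintro a b ⟨ha, ha', ha''⟩ ⟨hb, hb', hb''⟩
    exact ⟨add_mem ha hb, by rw [rot_add, ha', hb'], by rw [hrefl_add, ha'', hb'']⟩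
  zero_mem' := ⟨zero_mem _, by funext i j; simp [rot], by funext i j; simp [hrefl]⟩
  smul_mem' := by
    rintro c a ⟨ha, ha', ha''⟩
    exact ⟨Submodule.smul_mem _ c ha, by rw [rot_smul, ha'],
      by rw [hrefl_smul, ha'']⟩

/-- `σ₂`: the sum of the first `n` terms of a sequence over `ZMod 2`. -/
def seqSum (n : ℕ) (S : ℕ → ZMod 2) : ZMod 2 := ∑ j ∈ Finset.Icc 1 n, S j

/-- The subspace `DST₀(n)` of dihedrally symmetric Steinhaus triangles whose
first row has zero sum. -/
def DST0 (n : ℕ) : Submodule (ZMod 2) (ℕ → ℕ → ZMod 2) where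
  carrier := {a | a ∈ DST n ∧ seqSum n (a 1) = 0}
  add_mem' := by
    rintro a b ⟨ha, ha'⟩ ⟨hb, hb'⟩
    refine ⟨add_mem ha hb, ?_⟩
    have h : seqSum n ((a + b) 1) = seqSum n (a 1) + seqSum n (b 1) := by
      simp [seqSum, Finset.sum_add_distrib]
    rw [h, ha', hb', add_zero]
  zero_mem' := ⟨zero_mem _, by simp [seqSum]⟩
  smul_mem' := by
    rintro c a ⟨ha, ha'⟩
    refine ⟨Submodule.smul_mem _ c ha, ?_⟩
    have h : seqSum n ((c • a) 1) = c • seqSum n (a 1) := by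
      simp [seqSum, smul_eq_mul, Finset.mul_sum]
    rw [h, ha', smul_zero]

/-- The derived sequence `∂S`. -/
def der (S : ℕ → ZMod 2) : ℕ → ZMod 2 := fun j => S j + S (j + 1)

/-- The antiderived sequence `∫_{i,x} S`, whose `j`-th term is
`x + Σ_{k=1}^{i-1} S k + Σ_{k=1}^{j-1} S k`. -/
def antider (i : ℕ) (x : ZMod 2) (S : ℕ → ZMod 2) : ℕ → ZMod 2 :=
  fun j => x + (∑ k ∈ Finset.Ico 1 i, S k) + (∑ k ∈ Finset.Ico 1 j, S k)

/-- A sequence of length `n` is symmetric. -/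
def SymmSeq (n : ℕ) (S : ℕ → ZMod 2) : Prop :=
  ∀ j, 1 ≤ j → j ≤ n → S (n - j + 1) = S j

/-- The binomial sequence `bs(k,l)` whose `j`-th term is `C(l+j-1, k) mod 2`. -/
def bseq (k l : ℤ) : ℕ → ZMod 2 := fun j => ((ibinom (l + (j : ℤ) - 1) k : ℤ) : ZMod 2)

/-- The map `H : ST(n) → ST(n-3)` removing the first row and the two sides. -/
def Hmap (n : ℕ) (a : ℕ → ℕ → ZMod 2) : ℕ → ℕ → ZMod 2 :=
  fun i j => if InTri (n - 3) i j then a (1 + i) (2 + j) else 0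

/-- The projection `π_G` of a subspace `V` of triangles onto coordinates in `G`. -/
def proj (V : Submodule (ZMod 2) (ℕ → ℕ → ZMod 2)) (G : Set (ℕ × ℕ)) :
    V →ₗ[ZMod 2] (G → ZMod 2) where
  toFun a := fun p => (a : ℕ → ℕ → ZMod 2) p.1.1 p.1.2
  map_add' := fun _ _ => rfl
  map_smul' := fun _ _ => rfl

/-- `G` is a generating index set of the subspace `V` of `ST(n)`:
`G` consists of triangle indices and `π_G : V → (ZMod 2)^G` is an isomorphism. -/
def IsGenIndexSet (n : ℕ) (V : Submodule (ZMod 2) (ℕ → ℕ → ZMod 2))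
    (G : Set (ℕ × ℕ)) : Prop :=
  (∀ p ∈ G, InTri n p.1 p.2) ∧ Function.Bijective (proj V G)

end Steinhaus

/-!
The map `H` deleting the first row and both sides commutes with the rotation and the reflection,
so it sends `DST(n)` to `DST(n-3)`. Its kernel is spanned by the border triangle. Its image is the
kernel of the first-row sum on `DST(n-3)`: the partial sums of a symmetric row with zero sum are
again symmetric, and they form the first row of a preimage. The first-row sum vanishes on `DST(m)`
for even `m` (the row is a palindrome of even length) and is onto for odd `m`, whence
`dim DST(n) = dim DST(n-3) + 1 - [n even]`; the values `0, 1, 0` for `n = 0, 1, 2` start the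
recursion.
-/

namespace Steinhaus

variable {n i j : ℕ} {a b : ℕ → ℕ → ZMod 2}

lemma ST_eq_zero_of_row (ha : a ∈ ST n) (h : ∀ j, 1 ≤ j → j ≤ n → a 1 j = 0) :
    a = 0 := by
  suffices ∀ i j, a i j = 0 by funext i j; exact this i j
  intro i
  induction i using Nat.strong_induction_on with
  | _ i ih =>
    intro j
    by_cases hij : InTri n i j
    · obtain ⟨hi, hij, hjn⟩ := hij
      rcases hi.eq_or_lt with rfl | hi
      · exact h j hij hjn
      · rw [ha.2 i j hi hij hjn, ih _ (by omega), ih _ (by omega), add_zero]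
    · exact ha.1 i j hij

lemma ST_ext_row (ha : a ∈ ST n) (hb : b ∈ ST n)
    (h : ∀ j, 1 ≤ j → j ≤ n → a 1 j = b 1 j) : a = b :=
  sub_eq_zero.1 <| ST_eq_zero_of_row (sub_mem ha hb) fun j h1 hj => sub_eq_zero.2 (h j h1 hj)

lemma rot_apply (h : InTri n i j) : rot n a i j = a (j - i + 1) (n - i + 1) := if_pos h

lemma hrefl_apply (h : InTri n i j) : hrefl n a i j = a i (n - j + i) := if_pos h

lemma Hmap_apply (h : InTri (n - 3) i j) : Hmap n a i j = a (1 + i) (2 + j) := if_pos h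

lemma rot_mem_ST (ha : a ∈ ST n) : rot n a ∈ ST n := by
  refine ⟨fun i j h => by simp [rot, h], fun i j hi hij hjn => ?_⟩
  rw [rot_apply ⟨by omega, hij, hjn⟩, rot_apply ⟨by omega, by omega, by omega⟩,
    rot_apply ⟨by omega, by omega, hjn⟩,
    show j - 1 - (i - 1) + 1 = j - i + 1 by omega, show n - (i - 1) + 1 = n - i + 2 by omega,
    show j - (i - 1) + 1 = j - i + 2 by omega,
    ha.2 (j - i + 2) (n - i + 2) (by omega) (by omega) (by omega),
    show j - i + 2 - 1 = j - i + 1 by omega, show n - i + 2 - 1 = n - i + 1 by omega]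
  grind

lemma hrefl_mem_ST (ha : a ∈ ST n) : hrefl n a ∈ ST n := by
  refine ⟨fun i j h => by simp [hrefl, h], fun i j hi hij hjn => ?_⟩
  rw [hrefl_apply ⟨by omega, hij, hjn⟩, hrefl_apply ⟨by omega, by omega, by omega⟩,
    hrefl_apply ⟨by omega, by omega, hjn⟩, ha.2 i (n - j + i) hi (by omega) (by omega),
    show n - (j - 1) + (i - 1) = n - j + i by omega, show n - j + (i - 1) = n - j + i - 1 by omega,
    add_comm]

lemma rot_eq_self_iff (ha : a ∈ ST n) :
    rot n a = a ↔ ∀ j, 1 ≤ j → j ≤ n → a j n = a 1 j := by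
  have key : ∀ j, 1 ≤ j → j ≤ n → rot n a 1 j = a j n := fun j h1 hj => by
    rw [rot_apply ⟨le_rfl, h1, hj⟩, Nat.sub_add_cancel h1, Nat.sub_add_cancel (h1.trans hj)]
  refine ⟨fun h j h1 hj => by rw [← key j h1 hj, h], fun h => ?_⟩
  exact ST_ext_row (rot_mem_ST ha) ha fun j h1 hj => (key j h1 hj).trans (h j h1 hj)

lemma hrefl_eq_self_iff (ha : a ∈ ST n) :
    hrefl n a = a ↔ ∀ x y, x + y = n + 1 → a 1 x = a 1 y := by
  refine ⟨fun h x y hxy => ?_, fun h => ?_⟩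
  · by_cases hx : InTri n 1 x
    · have := congrFun (congrFun h 1) x
      rwa [hrefl_apply hx, show n - x + 1 = y by have := hx.2; omega, eq_comm] at this
    · rw [ha.1 1 x hx, ha.1 1 y fun ⟨_, hy, hyn⟩ => hx ⟨le_rfl, by omega, by omega⟩]
  · exact ST_ext_row (hrefl_mem_ST ha) ha fun j h1 hj => by
      rw [hrefl_apply ⟨le_rfl, h1, hj⟩, h (n - j + 1) j (by omega)]

lemma diag_eq_right_of_hrefl_eq_self (hh : hrefl n a = a) (h1 : 1 ≤ i) (hi : i ≤ n) :
    a i i = a i n := by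
  have := congrFun (congrFun hh i) i
  rwa [hrefl_apply ⟨h1, le_rfl, hi⟩, Nat.sub_add_cancel hi, eq_comm] at this

def ofRow (n : ℕ) (S : ℕ → ZMod 2) : ℕ → ℕ → ZMod 2
  | 0 => fun _ => 0
  | 1 => fun j => if InTri n 1 j then S j else 0
  | i + 2 => fun j =>
    if InTri n (i + 2) j then ofRow n S (i + 1) (j - 1) + ofRow n S (i + 1) j else 0

lemma ofRow_mem_ST (S : ℕ → ZMod 2) : ofRow n S ∈ ST n := by
  refine ⟨fun i j h => ?_, fun i j hi hij hjn => ?_⟩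
  · match i with
    | 0 => rfl
    | 1 => simp [ofRow, h]
    | i + 2 => simp [ofRow, h]
  · obtain ⟨i, rfl⟩ : ∃ k, i = k + 2 := ⟨i - 2, by omega⟩
    exact if_pos ⟨by omega, hij, hjn⟩

lemma ofRow_one (S : ℕ → ZMod 2) (h1 : 1 ≤ j) (hj : j ≤ n) : ofRow n S 1 j = S j :=
  if_pos ⟨le_rfl, h1, hj⟩

lemma sum_range_add_of_palindrome {M : Type*} [AddCommMonoid M] {f : ℕ → M} {p q : ℕ}
    (hf : ∀ k < p + q, f (p + q - 1 - k) = f k) :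
    ∑ k ∈ range (p + q), f k = ∑ k ∈ range p, f k + ∑ k ∈ range q, f k := by
  rw [sum_range_add, ← sum_range_reflect _ q]
  congr 1
  refine sum_congr rfl fun k hk => ?_
  rw [mem_range] at hk
  rw [← hf k (by omega)]
  congr 1
  omega

lemma sum_range_row_eq_seqSum (ha : a ∈ ST n) {N : ℕ} (hN : n < N) :
    ∑ k ∈ range N, a 1 k = seqSum n (a 1) := by
  refine (sum_subset (fun k hk => ?_) fun k _ hk => ha.1 1 k fun h => hk ?_).symm
  · simp only [mem_Icc, mem_range] at hk ⊢; omega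
  · obtain ⟨-, h1, hn⟩ := h; simp only [mem_Icc]; omega

lemma seqSum_row_eq_zero_of_even (ha : a ∈ ST n) (hh : hrefl n a = a) (hn : Even n) :
    seqSum n (a 1) = 0 := by
  obtain ⟨p, rfl⟩ := hn
  rw [← sum_range_row_eq_seqSum ha (N := (p + 1) + (p + 1)) (by omega),
    sum_range_add_of_palindrome fun k hk => (hrefl_eq_self_iff ha).1 hh _ _ (by omega),
    CharTwo.add_self_eq_zero]

lemma sum_range_row_eq_of_seqSum_eq_zero (ha : a ∈ ST n) (hh : hrefl n a = a)
    (hsum : seqSum n (a 1) = 0) {p q : ℕ} (hpq : p + q = n + 2) :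
    ∑ k ∈ range p, a 1 k = ∑ k ∈ range q, a 1 k := by
  rw [← CharTwo.add_eq_zero, ← sum_range_add_of_palindrome,
    sum_range_row_eq_seqSum ha (by omega), hsum]
  exact fun k hk => (hrefl_eq_self_iff ha).1 hh _ _ (by omega)

lemma Hmap_mem_ST (ha : a ∈ ST n) : Hmap n a ∈ ST (n - 3) := by
  refine ⟨fun i j h => by simp [Hmap, h], fun i j hi hij hjn => ?_⟩
  rw [Hmap_apply ⟨by omega, hij, hjn⟩, Hmap_apply ⟨by omega, by omega, by omega⟩,
    Hmap_apply ⟨by omega, by omega, hjn⟩, ha.2 (1 + i) (2 + j) (by omega) (by omega) (by omega),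
    show 1 + i - 1 = 1 + (i - 1) by omega, show 2 + j - 1 = 2 + (j - 1) by omega]

lemma Hmap_one (h1 : 1 ≤ j) (hj : j ≤ n - 3) : Hmap n a 1 j = a 2 (2 + j) :=
  Hmap_apply ⟨le_rfl, h1, hj⟩

lemma Hmap_rot : Hmap n (rot n a) = rot (n - 3) (Hmap n a) := by
  funext i j
  by_cases h : InTri (n - 3) i j
  · obtain ⟨h1, hij, hj⟩ := h
    rw [Hmap_apply ⟨h1, hij, hj⟩, rot_apply ⟨h1, hij, hj⟩,
      rot_apply ⟨by omega, by omega, by omega⟩, Hmap_apply ⟨by omega, by omega, by omega⟩]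
    congr 1 <;> omega
  · simp [Hmap, rot, h]

lemma Hmap_hrefl : Hmap n (hrefl n a) = hrefl (n - 3) (Hmap n a) := by
  funext i j
  by_cases h : InTri (n - 3) i j
  · obtain ⟨h1, hij, hj⟩ := h
    rw [Hmap_apply ⟨h1, hij, hj⟩, hrefl_apply ⟨h1, hij, hj⟩,
      hrefl_apply ⟨by omega, by omega, by omega⟩, Hmap_apply ⟨by omega, by omega, by omega⟩]
    congr 1; omega
  · simp [Hmap, hrefl, h]

lemma Hmap_mem_DST (ha : a ∈ DST n) : Hmap n a ∈ DST (n - 3) := by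
  obtain ⟨hst, hr, hh⟩ := ha
  exact ⟨Hmap_mem_ST hst, by rw [← Hmap_rot, hr], by rw [← Hmap_hrefl, hh]⟩

lemma sum_Icc_add_succ {R : Type*} [CommRing R] [CharP R 2] (f : ℕ → R) (m : ℕ) :
    ∑ j ∈ Icc 1 m, (f j + f (j + 1)) = f 1 + f (m + 1) := by
  induction m with
  | zero => simp [CharTwo.add_self_eq_zero]
  | succ m ih => rw [sum_Icc_succ_top (by omega), ih]; grind

/-- The first row of `H(a)` telescopes to `a₁₂ + a₁,ₙ₋₁`, which vanishes by symmetry. -/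
lemma seqSum_Hmap (ha : a ∈ DST n) : seqSum (n - 3) (Hmap n a 1) = 0 := by
  obtain ⟨hst, -, hh⟩ := ha
  rcases Nat.lt_or_ge n 3 with hn | hn
  · simp [seqSum, show n - 3 = 0 by omega]
  have hrow : ∀ j ∈ Icc 1 (n - 3), Hmap n a 1 j = a 1 (j + 1) + a 1 (j + 1 + 1) := by
    intro j hj
    rw [mem_Icc] at hj
    rw [Hmap_one hj.1 hj.2, hst.2 2 (2 + j) le_rfl (by omega) (by omega)]
    congr 2 <;> omega
  rw [seqSum, sum_congr rfl hrow, sum_Icc_add_succ (fun j => a 1 (j + 1)),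
    (hrefl_eq_self_iff hst).1 hh (1 + 1) (n - 3 + 1 + 1) (by omega), CharTwo.add_self_eq_zero]

/-- Going down the right side of `a` with the local rule, each step adds an entry of the right
side of `H(a)`, which is the matching entry of its first row, i.e. of the second row of `a`;
the apex then comes from the horizontal symmetry. -/
lemma rot_eq_self_of_Hmap (hn : 3 ≤ n) (ha : a ∈ ST n) (hh : hrefl n a = a)
    (hH : rot (n - 3) (Hmap n a) = Hmap n a) (h11 : a 1 1 = 0) : rot n a = a := by
  have hsym := (hrefl_eq_self_iff ha).1 hh
  have h1n : a 1 n = 0 := (hsym 1 n (by omega)).symm.trans h11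
  have hinner : ∀ j, 2 ≤ j → j ≤ n - 2 → a j (n - 1) = a 1 j + a 1 (j + 1) := by
    intro j h2 hj
    have := (rot_eq_self_iff (Hmap_mem_ST ha)).1 hH (j - 1) (by omega) (by omega)
    rw [Hmap_apply ⟨by omega, by omega, le_rfl⟩, Hmap_one (by omega) (by omega),
      ha.2 2 (2 + (j - 1)) le_rfl (by omega) (by omega)] at this
    rw [show n - 1 = 2 + (n - 3) by omega, show j = 1 + (j - 1) by omega, this]
    congr 2 <;> omega
  have hcol : ∀ j, 2 ≤ j → j ≤ n - 1 → a j n = a 1 j := by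
    intro j hj
    induction j, hj using Nat.le_induction with
    | base =>
      intro _
      rw [ha.2 2 n le_rfl (by omega) le_rfl, h1n, add_zero]
      exact hsym _ _ (by omega)
    | succ j hj ih =>
      intro hjn
      rw [ha.2 (j + 1) n (by omega) (by omega) le_rfl, Nat.add_sub_cancel, ih (by omega),
        hinner j hj (by omega)]
      grind
  rw [rot_eq_self_iff ha]
  intro j h1 hj
  rcases (show j = 1 ∨ (2 ≤ j ∧ j ≤ n - 1) ∨ j = n by omega) with rfl | hj' | rfl
  · rw [h1n, h11]
  · exact hcol j hj'.1 hj'.2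
  · rw [ha.2 j j (by omega) le_rfl le_rfl, diag_eq_right_of_hrefl_eq_self hh (by omega) (by omega),
      CharTwo.add_self_eq_zero, h1n]

def borderRow (n j : ℕ) : ZMod 2 := if 2 ≤ j ∧ j ≤ n - 1 then 1 else 0

/-- The triangle whose entries are `1` exactly on the border, corners excluded. -/
def border (n : ℕ) : ℕ → ℕ → ZMod 2 := ofRow n (borderRow n)

lemma border_one (j : ℕ) : border n 1 j = borderRow n j := by
  by_cases h : InTri n 1 j
  · exact ofRow_one _ h.2.1 h.2.2
  · rw [border, (ofRow_mem_ST _).1 1 j h, borderRow,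
      if_neg fun h' => h ⟨le_rfl, by omega, by omega⟩]

lemma Hmap_border : Hmap n (border n) = 0 := by
  have hst : border n ∈ ST n := ofRow_mem_ST _
  refine ST_eq_zero_of_row (Hmap_mem_ST hst) fun j h1 hj => ?_
  rw [Hmap_one h1 hj, hst.2 2 (2 + j) le_rfl (by omega) (by omega), border_one, border_one,
    borderRow, borderRow, if_pos (by omega), if_pos (by omega), CharTwo.add_self_eq_zero]

lemma border_mem_DST (hn : 3 ≤ n) : border n ∈ DST n := by
  have hst : border n ∈ ST n := ofRow_mem_ST _
  have hh : hrefl n (border n) = border n := (hrefl_eq_self_iff hst).2 fun x y hxy => by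
    simp only [border_one, borderRow]
    congr 1
    exact propext (by omega)
  refine ⟨hst, rot_eq_self_of_Hmap hn hst hh ?_ ?_, hh⟩
  · rw [Hmap_border]; funext i j; simp [rot]
  · rw [border_one, borderRow, if_neg (by omega)]

lemma border_ne_zero (hn : 3 ≤ n) : border n ≠ 0 := fun h => by
  simpa [border_one, borderRow, show 2 ≤ n - 1 by omega] using congrFun (congrFun h 1) 2

lemma eq_smul_border_of_Hmap_eq_zero (hn : 3 ≤ n) (ha : a ∈ DST n) (hH : Hmap n a = 0) :
    a = a 1 2 • border n := by
  obtain ⟨hst, hr, hh⟩ := ha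
  have hsym := (hrefl_eq_self_iff hst).1 hh
  have hconst : ∀ j, 2 ≤ j → j ≤ n - 1 → a 1 j = a 1 2 := by
    intro j hj
    induction j, hj using Nat.le_induction with
    | base => exact fun _ => rfl
    | succ j hj ih =>
      intro hjn
      have h0 := congrFun (congrFun hH 1) (j - 1)
      rw [Hmap_one (by omega) (by omega), hst.2 2 (2 + (j - 1)) le_rfl (by omega) (by omega),
        show 2 + (j - 1) - 1 = j by omega, show 2 + (j - 1) = j + 1 by omega] at h0
      rw [← ih (by omega)]
      exact (CharTwo.add_eq_zero.1 h0).symm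
  have h1n : a 1 n = 0 := by
    have := (rot_eq_self_iff hst).1 hr 2 (by omega) (by omega)
    rw [hst.2 2 n le_rfl (by omega) le_rfl, hconst (n - 1) (by omega) le_rfl] at this
    grind
  refine ST_ext_row hst (Submodule.smul_mem _ _ (ofRow_mem_ST _)) fun j h1 hj => ?_
  rw [Pi.smul_apply, Pi.smul_apply, border_one, borderRow, smul_eq_mul]
  split_ifs with hj'
  · rw [mul_one, hconst j hj'.1 hj'.2]
  · rcases (show j = 1 ∨ j = n by omega) with rfl | rfl
    · rw [mul_zero, hsym 1 n (by omega), h1n]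
    · rw [mul_zero, h1n]

lemma seqSum_border_of_odd (hn : 3 ≤ n) (hodd : Odd n) : seqSum n (border n 1) = 1 := by
  have hfilter : (Icc 1 n).filter (fun j => 2 ≤ j ∧ j ≤ n - 1) = Icc 2 (n - 1) := by
    ext j; simp only [mem_filter, mem_Icc]; omega
  obtain ⟨t, rfl⟩ := hodd
  simp only [seqSum, border_one, borderRow]
  rw [sum_boole, hfilter, Nat.card_Icc, show 2 * t + 1 - 1 + 1 - 2 = 2 * (t - 1) + 1 by omega]
  simp [CharTwo.two_eq_zero]

/-- The first row `Sⱼ = b₁₁ + ⋯ + b₁,ⱼ₋₂` is the one whose second row starts with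
`0, b₁₁, b₁₂, …`; it is symmetric because the row of `b` has zero sum. -/
lemma exists_Hmap_eq (hn : 3 ≤ n) (hb : b ∈ DST (n - 3)) (hsum : seqSum (n - 3) (b 1) = 0) :
    ∃ a ∈ DST n, Hmap n a = b := by
  obtain ⟨hbst, hbr, hbh⟩ := hb
  set S : ℕ → ZMod 2 := fun j => ∑ k ∈ range (j - 1), b 1 k
  have hast : ofRow n S ∈ ST n := ofRow_mem_ST S
  have hH : Hmap n (ofRow n S) = b := ST_ext_row (Hmap_mem_ST hast) hbst fun j h1 hj => by
    rw [Hmap_one h1 hj, hast.2 2 (2 + j) le_rfl (by omega) (by omega),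
      ofRow_one _ (by omega) (by omega), ofRow_one _ (by omega) (by omega)]
    simp only [S, show 2 + j - 1 = j + 1 by omega,
      Nat.add_sub_cancel, sum_range_succ, ← add_assoc, CharTwo.add_self_eq_zero, zero_add]
  have hh : hrefl n (ofRow n S) = ofRow n S := (hrefl_eq_self_iff hast).2 fun x y hxy => by
    by_cases hx : 1 ≤ x ∧ x ≤ n
    · rw [ofRow_one _ hx.1 hx.2, ofRow_one _ (by omega) (by omega)]
      exact sum_range_row_eq_of_seqSum_eq_zero hbst hbh hsum (by omega)
    · rw [hast.1 1 x fun h => hx ⟨h.2.1, h.2.2⟩,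
        hast.1 1 y fun ⟨_, hy1, hyn⟩ => hx ⟨by omega, by omega⟩]
  have h11 : ofRow n S 1 1 = 0 := ofRow_one _ le_rfl (by omega)
  exact ⟨ofRow n S, ⟨hast, rot_eq_self_of_Hmap hn hast hh (by rw [hH, hbr]) h11, hh⟩, hH⟩

def HmapDST (n : ℕ) : DST n →ₗ[ZMod 2] DST (n - 3) where
  toFun a := ⟨Hmap n a, Hmap_mem_DST a.2⟩
  map_add' a b := Subtype.ext <| funext₂ fun i j => by
    by_cases h : InTri (n - 3) i j <;> simp [Hmap, h]
  map_smul' c a := Subtype.ext <| funext₂ fun i j => by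
    by_cases h : InTri (n - 3) i j <;> simp [Hmap, h]

def rowSum (n : ℕ) : DST n →ₗ[ZMod 2] ZMod 2 where
  toFun a := seqSum n ((a : ℕ → ℕ → ZMod 2) 1)
  map_add' a b := by simp [seqSum, sum_add_distrib]
  map_smul' c a := by simp [seqSum, mul_sum]

instance (n : ℕ) : FiniteDimensional (ZMod 2) (DST n) :=
  let row : DST n →ₗ[ZMod 2] Fin (n + 1) → ZMod 2 :=
    { toFun a j := (a : ℕ → ℕ → ZMod 2) 1 j, map_add' _ _ := rfl, map_smul' _ _ := rfl }
  Module.Finite.of_injective row fun a b h => Subtype.ext <|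
    ST_ext_row a.2.1 b.2.1 fun j _ hj => congrFun h ⟨j, by omega⟩

lemma finrank_ker_HmapDST (hn : 3 ≤ n) :
    Module.finrank (ZMod 2) (LinearMap.ker (HmapDST n)) = 1 := by
  have hker : LinearMap.ker (HmapDST n) = (ZMod 2) ∙ ⟨border n, border_mem_DST hn⟩ := by
    refine le_antisymm (fun x hx => ?_) ?_
    · refine Submodule.mem_span_singleton.2 ⟨(x : ℕ → ℕ → ZMod 2) 1 2, Subtype.ext ?_⟩
      exact (eq_smul_border_of_Hmap_eq_zero hn x.2 (congrArg Subtype.val hx)).symm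
    · exact (Submodule.span_singleton_le_iff_mem _ _).2 (Subtype.ext Hmap_border)
  rw [hker, finrank_span_singleton]
  exact fun h => border_ne_zero hn (congrArg Subtype.val h)

lemma range_HmapDST (hn : 3 ≤ n) :
    LinearMap.range (HmapDST n) = LinearMap.ker (rowSum (n - 3)) := by
  refine le_antisymm ?_ fun b hb => ?_
  · rintro _ ⟨a, rfl⟩
    exact seqSum_Hmap a.2
  · obtain ⟨a, ha, hH⟩ := exists_Hmap_eq hn b.2 hb
    exact ⟨⟨a, ha⟩, Subtype.ext hH⟩

lemma ofRow_one_mem_DST_one : ofRow 1 1 ∈ DST 1 := by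
  have hst : ofRow 1 1 ∈ ST 1 := ofRow_mem_ST 1
  refine ⟨hst, (rot_eq_self_iff hst).2 fun j h1 hj => ?_,
    (hrefl_eq_self_iff hst).2 fun x y hxy => ?_⟩
  · rw [show j = 1 by omega]
  · rcases (show x = 1 ∨ (x = 0 ∧ y = 2) ∨ (x = 2 ∧ y = 0) by omega)
      with rfl | ⟨rfl, rfl⟩ | ⟨rfl, rfl⟩
    · rw [show y = 1 by omega]
    all_goals rfl

lemma exists_rowSum_eq_one {m : ℕ} (hm : Odd m) : ∃ w, rowSum m w = 1 := by
  rcases (show m = 1 ∨ 3 ≤ m by obtain ⟨t, rfl⟩ := hm; omega) with rfl | h3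
  · exact ⟨⟨ofRow 1 1, ofRow_one_mem_DST_one⟩, rfl⟩
  · exact ⟨⟨border m, border_mem_DST h3⟩, seqSum_border_of_odd h3 hm⟩

lemma finrank_ker_rowSum (m : ℕ) :
    Module.finrank (ZMod 2) (LinearMap.ker (rowSum m)) + (if m % 2 = 1 then 1 else 0) =
      Module.finrank (ZMod 2) (DST m) := by
  rcases Nat.even_or_odd m with hm | hm
  · have hker : LinearMap.ker (rowSum m) = ⊤ :=
      eq_top_iff.2 fun a _ => seqSum_row_eq_zero_of_even a.2.1 a.2.2.2 hm
    rw [hker, finrank_top, if_neg (Nat.not_odd_iff_even.2 hm ∘ Nat.odd_iff.2), add_zero]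
  · obtain ⟨w, hw⟩ := exists_rowSum_eq_one hm
    have hrange : LinearMap.range (rowSum m) = ⊤ :=
      LinearMap.range_eq_top.2 fun c => ⟨c • w, by rw [map_smul, hw, smul_eq_mul, mul_one]⟩
    have := (rowSum m).finrank_range_add_finrank_ker
    rw [hrange, finrank_top, Module.finrank_self] at this
    rw [if_pos (Nat.odd_iff.1 hm)]
    omega

lemma finrank_DST_add_three (k : ℕ) :
    Module.finrank (ZMod 2) (DST (k + 3)) + (if k % 2 = 1 then 1 else 0) =
      Module.finrank (ZMod 2) (DST k) + 1 := by
  have hrn := (HmapDST (k + 3)).finrank_range_add_finrank_ker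
  rw [range_HmapDST (by omega), finrank_ker_HmapDST (by omega), Nat.add_sub_cancel] at hrn
  rw [← hrn, ← finrank_ker_rowSum k]
  ring

lemma DST_zero : DST 0 = ⊥ :=
  (Submodule.eq_bot_iff _).2 fun _ ha => ST_eq_zero_of_row ha.1 fun _ h1 h0 => by omega

lemma DST_one : DST 1 = (ZMod 2) ∙ ofRow 1 1 := by
  refine le_antisymm (fun a ha => Submodule.mem_span_singleton.2 ⟨a 1 1, ?_⟩) ?_
  · refine ST_ext_row (Submodule.smul_mem _ _ (ofRow_mem_ST 1)) ha.1 fun j h1 hj => ?_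
    obtain rfl : j = 1 := by omega
    rw [Pi.smul_apply, Pi.smul_apply, ofRow_one _ le_rfl le_rfl, smul_eq_mul, Pi.one_apply, mul_one]
  · exact (Submodule.span_singleton_le_iff_mem _ _).2 ofRow_one_mem_DST_one

lemma DST_two : DST 2 = ⊥ := by
  refine (Submodule.eq_bot_iff _).2 fun a ha => ST_eq_zero_of_row ha.1 fun j h1 hj => ?_
  obtain ⟨hst, hr, -⟩ := ha
  have h12 := (rot_eq_self_iff hst).1 hr 1 le_rfl (by omega)
  have h22 := (rot_eq_self_iff hst).1 hr 2 (by omega) le_rfl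
  rw [hst.2 2 2 le_rfl le_rfl le_rfl] at h22
  have h11 : a 1 1 = 0 := by grind
  rcases (show j = 1 ∨ j = 2 by omega) with rfl | rfl
  · exact h11
  · rw [h12, h11]

/-- Corollary 15. `dim DST(n) = ⌊(n+3)/6⌋ + δ_{1,(n mod 6)}`. -/
theorem statement15 (n : ℕ) :
    Module.finrank (ZMod 2) (DST n) = (n + 3) / 6 + (if n % 6 = 1 then 1 else 0) := by
  induction n using Nat.strong_induction_on with
  | _ n ih =>
    match n with
    | 0 => rw [DST_zero, finrank_bot]; rfl
    | 1 =>
      rw [DST_one, finrank_span_singleton fun h =>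
        one_ne_zero ((ofRow_one 1 le_rfl le_rfl).symm.trans (congrFun (congrFun h 1) 1))]
      rfl
    | 2 => rw [DST_two, finrank_bot]; rfl
    | k + 3 =>
      have hrec := finrank_DST_add_three k
      rw [ih k (by omega)] at hrec
      split_ifs at hrec ⊢ <;> omega

end Steinhaus
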